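/- If A is a proper subset of B, where B is canonically arranged by components (B_n) and A is arranged by A_n = B_n ∩ A, then the size sequence of A is eventually strictly less than that of B: there exists m such that for all n ≥ m, σ_n(A) < σ_n(B). (Part–Whole Principle.) -/
import Mathlib


open Finset

/-- Part–Whole Principle: if `A ⊊ B` and `A` inherits the canonical arrangement of `B`
(components `A_n = B_n ∩ A`), then the size sequence of `A` is eventually strictly
smaller than that of `B`. -/
theorem part_whole (B : Set ℕ) (Bn : ℕ → Finset ℕ)
    (hdisj : Pairwise (fun i j => Disjoint (Bn i) (Bn j)))
    (hcover : B = ⋃ n, (Bn n : Set ℕ))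
    (A : Set ℕ) (hA : A ⊂ B) :
    ∃ m, ∀ n ≥ m,
      ∑ i ∈ Finset.range (n + 1), ((Bn i : Set ℕ) ∩ A).ncard <
        ∑ i ∈ Finset.range (n + 1), (Bn i).card := by
  obtain ⟨x, hxB, hxA⟩ := Set.exists_of_ssubset hA
  rw [hcover] at hxB
  obtain ⟨_, ⟨m, rfl⟩, hxm⟩ := hxB
  refine ⟨m, fun n hn => ?_⟩
  refine Finset.sum_lt_sum ?_ ⟨m, ?_⟩
  · intro i _
    calc ((Bn i : Set ℕ) ∩ A).ncard ≤ (Bn i : Set ℕ).ncard :=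
          Set.ncard_le_ncard Set.inter_subset_left (Bn i).finite_toSet
      _ = (Bn i).card := Set.ncard_coe_finset _
  · refine ⟨Finset.mem_range.mpr (Nat.lt_succ_of_le hn), ?_⟩
    rw [← Set.ncard_coe_finset (Bn m)]
    exact Set.ncard_lt_ncard
      ⟨Set.inter_subset_left, fun h => hxA (h hxm).2⟩ (Bn m).finite_toSet
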